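/- Let c > 1 and let η > 0 be sufficiently small; set K = X^{2η} and write ℒ = log X. Let λₙ (X/8 < n ≤ X) be real numbers, let aₙ be real numbers with |aₙ| ≤ C₁·ℒ for some constant C₁, and set 𝒮(x) = Σ_{X/8 < n ≤ X} aₙ e(λₙ x) and 𝒥(x) = Σ_{X/8 < n ≤ X} e(λₙ x). Suppose there are constants U > 0 and C₂ > 0 such that |𝒥(x)| ≤ C₂·( U + ℒ·X^{1−c}·|x|^{−1} ) for all x with 0 < |x| ≤ 2K. Then there is a constant C (depending only on c, η, C₁, C₂) such that for every bounded Borel measurable function G on [X^{1−c}, K], |∫_{X^{1−c}}^{K} 𝒮(x) G(x) dx|² ≤ C·( ℒ⁴ · X^{2−c} · ∫_{X^{1−c}}^{K} |G(x)|² dx + U·X·ℒ² · ( ∫_{X^{1−c}}^{K} |G(x)| dx )² ). -/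

import Mathlib

/-!
By Cauchy–Schwarz over `n`, `|∫ 𝒮 G|² ≤ (∑ aₙ²) · ∑ₙ |∫ e(λₙ x) G(x) dx|²`, and expanding the
square turns the last sum into `∫∫ G(x) conj (G(y)) 𝒥(x - y) dx dy`. On the range `|x - y| ≤ K`
the hypothesis, together with the trivial bound `|𝒥| ≤ X`, gives
`|𝒥(t)| ≤ C₂ U + 2XB / (B + X|t|)` with `B = C₂ ℒ X^{1-c}`. The constant part contributes
`C₂ U (∫ |G|)²`; for the kernel part, `|G(x)||G(y)| ≤ (|G(x)|² + |G(y)|²) / 2` (Schur's test)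
reduces it to `∫ |G|²` times the `L¹` norm of the kernel on `[-K, K]`, which is
`4B log (1 + XK/B) ≪ B ℒ`.
-/

open Real MeasureTheory

/-- `e θ = exp(2πiθ)`. -/
noncomputable def e (θ : ℝ) : ℂ := Complex.exp (2 * Real.pi * Complex.I * θ)

/-- `Ssum X a lam x = Σ_{X/8 < n ≤ X} aₙ e(λₙ x)`. -/
noncomputable def Ssum (X : ℝ) (a lam : ℕ → ℝ) (x : ℝ) : ℂ :=
  ∑ n ∈ Finset.Ioc ⌊X/8⌋₊ ⌊X⌋₊, (a n : ℂ) * e (lam n * x)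

/-- `Jsum X lam x = Σ_{X/8 < n ≤ X} e(λₙ x)`. -/
noncomputable def Jsum (X : ℝ) (lam : ℕ → ℝ) (x : ℝ) : ℂ :=
  ∑ n ∈ Finset.Ioc ⌊X/8⌋₊ ⌊X⌋₊, e (lam n * x)

open ComplexConjugate

lemma norm_e (θ : ℝ) : ‖e θ‖ = 1 := by
  rw [e, Complex.norm_exp]
  norm_num [Complex.mul_re, Complex.mul_im]

lemma e_add (θ₁ θ₂ : ℝ) : e (θ₁ + θ₂) = e θ₁ * e θ₂ := by
  rw [e, e, e, ← Complex.exp_add]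
  push_cast
  ring_nf

lemma conj_e (θ : ℝ) : conj (e θ) = e (-θ) := by
  rw [e, e, ← Complex.exp_conj]
  simp only [map_mul, Complex.conj_I, Complex.conj_ofReal, map_ofNat, Complex.ofReal_neg]
  ring_nf

lemma continuous_e : Continuous e := by
  unfold e
  fun_prop

lemma card_Ioc_floor_le {X : ℝ} (hX : 0 ≤ X) : ((Finset.Ioc ⌊X / 8⌋₊ ⌊X⌋₊).card : ℝ) ≤ X := by
  rw [Nat.card_Ioc]
  exact (Nat.cast_le.2 (Nat.sub_le _ _)).trans (Nat.floor_le hX)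

lemma norm_Jsum_le {X : ℝ} (hX : 0 ≤ X) (lam : ℕ → ℝ) (t : ℝ) : ‖Jsum X lam t‖ ≤ X :=
  calc ‖Jsum X lam t‖ ≤ ∑ n ∈ Finset.Ioc ⌊X / 8⌋₊ ⌊X⌋₊, ‖e (lam n * t)‖ := norm_sum_le _ _
    _ = (Finset.Ioc ⌊X / 8⌋₊ ⌊X⌋₊).card := by simp [norm_e]
    _ ≤ X := card_Ioc_floor_le hX

lemma sum_sq_le_of_abs_le {X A : ℝ} (hX : 0 ≤ X) {a : ℕ → ℝ} (ha : ∀ n, |a n| ≤ A) :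
    ∑ n ∈ Finset.Ioc ⌊X / 8⌋₊ ⌊X⌋₊, a n ^ 2 ≤ X * A ^ 2 :=
  calc ∑ n ∈ Finset.Ioc ⌊X / 8⌋₊ ⌊X⌋₊, a n ^ 2
      ≤ ∑ n ∈ Finset.Ioc ⌊X / 8⌋₊ ⌊X⌋₊, A ^ 2 :=
        Finset.sum_le_sum fun n _ => sq_le_sq' (abs_le.1 (ha n)).1 (abs_le.1 (ha n)).2
    _ = (Finset.Ioc ⌊X / 8⌋₊ ⌊X⌋₊).card * A ^ 2 := by rw [Finset.sum_const, nsmul_eq_mul]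
    _ ≤ X * A ^ 2 := by gcongr; exact card_Ioc_floor_le hX

/-- The harmonic mean of the trivial bound `X` and the decay bound `B / |t|` for an exponential
sum: it dominates their minimum and, unlike it, has an elementary integral. -/
noncomputable def harmonicKernel (X B t : ℝ) : ℝ := 2 * X * B / (B + X * |t|)

section harmonicKernel

variable {X B : ℝ}

lemma harmonicKernel_nonneg (hX : 0 ≤ X) (hB : 0 < B) (t : ℝ) : 0 ≤ harmonicKernel X B t := by
  unfold harmonicKernel; positivity

lemma harmonicKernel_le (hX : 0 ≤ X) (hB : 0 < B) (t : ℝ) : harmonicKernel X B t ≤ 2 * X := by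
  rw [harmonicKernel, div_le_iff₀ (by positivity)]
  nlinarith [mul_nonneg hX (abs_nonneg t)]

lemma continuous_harmonicKernel (hX : 0 ≤ X) (hB : 0 < B) : Continuous (harmonicKernel X B) :=
  continuous_const.div (by fun_prop) fun t => by positivity

lemma harmonicKernel_even : Function.Even (harmonicKernel X B) := fun t => by
  simp only [harmonicKernel, abs_neg]

lemma le_add_harmonicKernel {V y t : ℝ} (hV : 0 ≤ V) (hX : 0 < X) (hB : 0 < B) (hyX : y ≤ X)
    (hy : t ≠ 0 → y ≤ V + B / |t|) : y ≤ V + harmonicKernel X B t := by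
  rcases eq_or_ne t 0 with rfl | ht
  · simp only [harmonicKernel, abs_zero, mul_zero, add_zero, mul_div_assoc, div_self hB.ne']
    linarith
  have ht' : 0 < |t| := abs_pos.2 ht
  have hmin : min X (B / |t|) ≤ harmonicKernel X B t := by
    rw [harmonicKernel, le_div_iff₀ (by positivity)]
    rcases le_total X (B / |t|) with h | h
    · rw [min_eq_left h]
      nlinarith [(le_div_iff₀ ht').1 h]
    · have hcancel : B / |t| * (X * |t|) = B * X := by field_simp
      rw [min_eq_right h]
      nlinarith [mul_le_mul_of_nonneg_right h hB.le]
  linarith [le_min (show y - V ≤ X by linarith) (show y - V ≤ B / |t| by linarith [hy ht])]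

lemma integral_harmonicKernel (hX : 0 < X) (hB : 0 < B) {L : ℝ} (hL : 0 ≤ L) :
    ∫ t in -L..L, harmonicKernel X B t = 4 * B * Real.log (1 + X * L / B) := by
  have hk := (continuous_harmonicKernel hX.le hB).intervalIntegrable (μ := volume)
  have hpos : ∫ t in (0 : ℝ)..L, harmonicKernel X B t = 2 * B * Real.log (1 + X * L / B) := by
    have hinv : ∀ t ∈ Set.uIcc 0 L, harmonicKernel X B t = 2 * B * (t + B / X)⁻¹ := by
      intro t ht
      rw [Set.uIcc_of_le hL] at ht
      have : 0 < t + B / X := by linarith [ht.1, div_pos hB hX]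
      rw [harmonicKernel, abs_of_nonneg ht.1]
      field_simp
      ring
    rw [intervalIntegral.integral_congr hinv, intervalIntegral.integral_const_mul,
      intervalIntegral.integral_comp_add_right (fun u => u⁻¹), zero_add,
      integral_inv_of_pos (by positivity) (by positivity)]
    congr 2
    field_simp
    ring
  have hneg : ∫ t in -L..0, harmonicKernel X B t = ∫ t in (0 : ℝ)..L, harmonicKernel X B t := by
    simpa only [neg_zero, harmonicKernel_even _] using
      (intervalIntegral.integral_comp_neg (a := 0) (b := L) (harmonicKernel X B)).symm
  rw [← intervalIntegral.integral_add_adjacent_intervals (hk _ 0) (hk 0 _), hneg, hpos]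
  ring

lemma setIntegral_harmonicKernel_sub_le (hX : 0 < X) (hB : 0 < B) {a b x : ℝ} (hab : a ≤ b)
    (hx : x ∈ Set.Icc a b) :
    ∫ y in Set.Ioc a b, harmonicKernel X B (x - y) ≤ 4 * B * Real.log (1 + X * (b - a) / B) := by
  have hk : Continuous fun y => harmonicKernel X B (x - y) :=
    (continuous_harmonicKernel hX.le hB).comp (by fun_prop)
  calc ∫ y in Set.Ioc a b, harmonicKernel X B (x - y)
      ≤ ∫ y in Set.Ioc (x - (b - a)) (x + (b - a)), harmonicKernel X B (x - y) :=
        setIntegral_mono_set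
          (hk.continuousOn.integrableOn_Icc.mono_set Set.Ioc_subset_Icc_self)
          (.of_forall fun y => harmonicKernel_nonneg hX.le hB _)
          (.of_forall (Set.Ioc_subset_Ioc (by linarith [hx.2]) (by linarith [hx.1])))
    _ = ∫ t in -(b - a)..(b - a), harmonicKernel X B t := by
        rw [← intervalIntegral.integral_of_le (by linarith),
          intervalIntegral.integral_comp_sub_left (harmonicKernel X B)]
        ring_nf
    _ = 4 * B * Real.log (1 + X * (b - a) / B) := integral_harmonicKernel hX hB (by linarith)

end harmonicKernel

theorem sum_norm_sq_integral_e_mul_le {ι : Type*} (s : Finset ι) (lam : ι → ℝ) {μ : Measure ℝ}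
    [SFinite μ] {G : ℝ → ℂ} (hG : Integrable G μ) :
    ∑ n ∈ s, ‖∫ x, e (lam n * x) * G x ∂μ‖ ^ 2 ≤
      ∫ z, ‖G z.1‖ * ‖G z.2‖ * ‖∑ n ∈ s, e (lam n * (z.1 - z.2))‖ ∂μ.prod μ := by
  set F : ι → ℝ → ℂ := fun n x => e (lam n * x) * G x
  have hF : ∀ n, Integrable (F n) μ := fun n =>
    hG.bdd_mul (c := 1) (continuous_e.comp (continuous_const_mul _)).aestronglyMeasurable
      (.of_forall fun x => (norm_e _).le)
  have hF' : ∀ n, Integrable (fun y => conj (F n y)) μ := fun n =>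
    Complex.conjCLE.toContinuousLinearMap.integrable_comp (hF n)
  have hterm : ∀ n, ((‖∫ x, F n x ∂μ‖ ^ 2 : ℝ) : ℂ) = ∫ z, F n z.1 * conj (F n z.2) ∂μ.prod μ := by
    intro n
    rw [integral_prod_mul (F n) (fun y => conj (F n y)), integral_conj, Complex.mul_conj',
      Complex.ofReal_pow]
  have hkernel : ∀ z : ℝ × ℝ, ∑ n ∈ s, F n z.1 * conj (F n z.2) =
      G z.1 * conj (G z.2) * ∑ n ∈ s, e (lam n * (z.1 - z.2)) := by
    intro z
    rw [Finset.mul_sum]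
    refine Finset.sum_congr rfl fun n _ => ?_
    rw [map_mul, conj_e, mul_sub, sub_eq_add_neg, e_add]
    ring
  have hsum : ((∑ n ∈ s, ‖∫ x, F n x ∂μ‖ ^ 2 : ℝ) : ℂ) =
      ∫ z, G z.1 * conj (G z.2) * ∑ n ∈ s, e (lam n * (z.1 - z.2)) ∂μ.prod μ := by
    rw [Complex.ofReal_sum, Finset.sum_congr rfl fun n _ => hterm n,
      ← integral_finsetSum _ fun n _ => (hF n).mul_prod (hF' n)]
    simp only [hkernel]
  calc ∑ n ∈ s, ‖∫ x, F n x ∂μ‖ ^ 2 = ‖((∑ n ∈ s, ‖∫ x, F n x ∂μ‖ ^ 2 : ℝ) : ℂ)‖ := by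
        rw [Complex.norm_real, Real.norm_of_nonneg (by positivity)]
    _ ≤ ∫ z, ‖G z.1‖ * ‖G z.2‖ * ‖∑ n ∈ s, e (lam n * (z.1 - z.2))‖ ∂μ.prod μ := by
        rw [hsum]
        refine (norm_integral_le_integral_norm _).trans_eq ?_
        simp only [norm_mul, Complex.norm_conj]

theorem integral_mul_mul_kernel_sub_le {μ : Measure ℝ} [IsFiniteMeasure μ] {f k : ℝ → ℝ}
    {R Λ : ℝ} (hf : Integrable f μ) (hf2 : Integrable (fun x => f x ^ 2) μ) (hk : Measurable k)
    (hk0 : ∀ t, 0 ≤ k t) (hkR : ∀ t, k t ≤ R) (hk_even : Function.Even k)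
    (hΛ : ∀ᵐ x ∂μ, ∫ y, k (x - y) ∂μ ≤ Λ) :
    ∫ z, f z.1 * f z.2 * k (z.1 - z.2) ∂μ.prod μ ≤ Λ * ∫ x, f x ^ 2 ∂μ := by
  have hK : ∀ᵐ z ∂μ.prod μ, ‖k (z.1 - z.2)‖ ≤ R := .of_forall fun z => by
    rw [Real.norm_of_nonneg (hk0 _)]; exact hkR _
  have hKm : AEStronglyMeasurable (fun z : ℝ × ℝ => k (z.1 - z.2)) (μ.prod μ) :=
    (hk.comp (measurable_fst.sub measurable_snd)).aestronglyMeasurable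
  have hsq : Integrable (fun z : ℝ × ℝ => f z.1 ^ 2 * k (z.1 - z.2)) (μ.prod μ) := by
    simpa using (hf2.mul_prod (integrable_const (1 : ℝ))).mul_bdd hKm hK
  have hsq' : Integrable (fun z : ℝ × ℝ => f z.2 ^ 2 * k (z.1 - z.2)) (μ.prod μ) := by
    simpa using ((integrable_const (1 : ℝ)).mul_prod hf2).mul_bdd hKm hK
  have hswap : ∫ z, f z.2 ^ 2 * k (z.1 - z.2) ∂μ.prod μ =
      ∫ z, f z.1 ^ 2 * k (z.1 - z.2) ∂μ.prod μ := by
    rw [← integral_prod_swap]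
    refine integral_congr_ae (.of_forall fun z => ?_)
    simp only [Prod.fst_swap, Prod.snd_swap]
    rw [← hk_even, neg_sub]
  calc ∫ z, f z.1 * f z.2 * k (z.1 - z.2) ∂μ.prod μ
      ≤ ∫ z, (f z.1 ^ 2 * k (z.1 - z.2) + f z.2 ^ 2 * k (z.1 - z.2)) / 2 ∂μ.prod μ :=
        integral_mono ((hf.mul_prod hf).mul_bdd hKm hK) ((hsq.add hsq').div_const 2) fun z => by
          nlinarith [mul_nonneg (sq_nonneg (f z.1 - f z.2)) (hk0 (z.1 - z.2))]
    _ = ∫ x, f x ^ 2 * ∫ y, k (x - y) ∂μ ∂μ := by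
        rw [integral_div, integral_add hsq hsq', hswap, add_self_div_two, integral_prod _ hsq]
        simp only [integral_const_mul]
    _ ≤ ∫ x, f x ^ 2 * Λ ∂μ := by
        refine integral_mono_ae ?_ (hf2.mul_const Λ) (hΛ.mono fun x hx => ?_)
        · simpa only [integral_const_mul] using hsq.integral_prod_left
        · exact mul_le_mul_of_nonneg_left hx (sq_nonneg _)
    _ = Λ * ∫ x, f x ^ 2 ∂μ := by rw [integral_mul_const, mul_comm]

theorem sum_norm_sq_setIntegral_e_mul_le {ι : Type*} (s : Finset ι) (lam : ι → ℝ)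
    {a b V X B M : ℝ} (hab : a ≤ b) (hX : 0 < X) (hB : 0 < B) {G : ℝ → ℂ} (hG : Measurable G)
    (hGM : ∀ x, ‖G x‖ ≤ M)
    (hJ : ∀ t, |t| ≤ b - a → ‖∑ n ∈ s, e (lam n * t)‖ ≤ V + harmonicKernel X B t) :
    ∑ n ∈ s, ‖∫ x in Set.Ioc a b, e (lam n * x) * G x‖ ^ 2 ≤
      V * (∫ x in Set.Ioc a b, ‖G x‖) ^ 2 +
        4 * B * Real.log (1 + X * (b - a) / B) * ∫ x in Set.Ioc a b, ‖G x‖ ^ 2 := by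
  set μ := volume.restrict (Set.Ioc a b)
  have : IsFiniteMeasure μ := ⟨by simp [μ]⟩
  have hGi : Integrable G μ := .of_bound hG.aestronglyMeasurable M (.of_forall hGM)
  have hG2 : Integrable (fun x => ‖G x‖ ^ 2) μ :=
    .of_bound (hG.norm.pow_const 2).aestronglyMeasurable (M ^ 2) (.of_forall fun x => by
      rw [norm_pow, norm_norm]; exact pow_le_pow_left₀ (norm_nonneg _) (hGM x) 2)
  have hGG := hGi.norm.mul_prod hGi.norm
  have hk := continuous_harmonicKernel hX.le hB
  have hkz : Integrable (fun z : ℝ × ℝ => ‖G z.1‖ * ‖G z.2‖ * harmonicKernel X B (z.1 - z.2))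
      (μ.prod μ) :=
    hGG.mul_bdd (hk.comp (by fun_prop)).aestronglyMeasurable (.of_forall fun z => by
      rw [Real.norm_of_nonneg (harmonicKernel_nonneg hX.le hB _)]
      exact harmonicKernel_le hX.le hB _)
  have hdiff : ∀ᵐ z ∂μ.prod μ, |z.1 - z.2| ≤ b - a := by
    rw [Measure.prod_restrict]
    refine ae_restrict_of_forall_mem (measurableSet_Ioc.prod measurableSet_Ioc) fun z hz => ?_
    obtain ⟨⟨h₁, h₂⟩, h₃, h₄⟩ := hz
    exact abs_sub_le_iff.2 ⟨by linarith, by linarith⟩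
  calc ∑ n ∈ s, ‖∫ x, e (lam n * x) * G x ∂μ‖ ^ 2
      ≤ ∫ z, ‖G z.1‖ * ‖G z.2‖ * ‖∑ n ∈ s, e (lam n * (z.1 - z.2))‖ ∂μ.prod μ :=
        sum_norm_sq_integral_e_mul_le s lam hGi
    _ ≤ ∫ z, V * (‖G z.1‖ * ‖G z.2‖) +
          ‖G z.1‖ * ‖G z.2‖ * harmonicKernel X B (z.1 - z.2) ∂μ.prod μ :=
        integral_mono_of_nonneg (.of_forall fun z => by positivity) ((hGG.const_mul V).add hkz)
          (hdiff.mono fun z hz => by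
            nlinarith [mul_le_mul_of_nonneg_left (hJ _ hz)
              (mul_nonneg (norm_nonneg (G z.1)) (norm_nonneg (G z.2)))])
    _ = V * (∫ x, ‖G x‖ ∂μ) ^ 2 +
          ∫ z, ‖G z.1‖ * ‖G z.2‖ * harmonicKernel X B (z.1 - z.2) ∂μ.prod μ := by
        rw [integral_add (hGG.const_mul V) hkz, integral_const_mul,
          integral_prod_mul (fun x => ‖G x‖) (fun x => ‖G x‖), sq]
    _ ≤ V * (∫ x, ‖G x‖ ∂μ) ^ 2 +
          4 * B * Real.log (1 + X * (b - a) / B) * ∫ x, ‖G x‖ ^ 2 ∂μ := by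
        gcongr
        refine integral_mul_mul_kernel_sub_le hGi.norm hG2 hk.measurable
          (harmonicKernel_nonneg hX.le hB) (harmonicKernel_le hX.le hB) harmonicKernel_even ?_
        exact ae_restrict_of_forall_mem measurableSet_Ioc fun x hx =>
          setIntegral_harmonicKernel_sub_le hX hB hab (Set.Ioc_subset_Icc_self hx)

theorem norm_integral_Ssum_mul_sq_le (X : ℝ) (a lam : ℕ → ℝ) {μ : Measure ℝ} {G : ℝ → ℂ}
    (hG : Integrable G μ) :
    ‖∫ x, Ssum X a lam x * G x ∂μ‖ ^ 2 ≤
      (∑ n ∈ Finset.Ioc ⌊X / 8⌋₊ ⌊X⌋₊, a n ^ 2) *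
        ∑ n ∈ Finset.Ioc ⌊X / 8⌋₊ ⌊X⌋₊, ‖∫ x, e (lam n * x) * G x ∂μ‖ ^ 2 := by
  set s := Finset.Ioc ⌊X / 8⌋₊ ⌊X⌋₊
  have hF : ∀ n, Integrable (fun x => e (lam n * x) * G x) μ := fun n =>
    hG.bdd_mul (c := 1) (continuous_e.comp (continuous_const_mul _)).aestronglyMeasurable
      (.of_forall fun x => (norm_e _).le)
  have hsum : ∫ x, Ssum X a lam x * G x ∂μ = ∑ n ∈ s, (a n : ℂ) * ∫ x, e (lam n * x) * G x ∂μ := by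
    simp only [Ssum, Finset.sum_mul, mul_assoc]
    rw [integral_finsetSum _ fun n _ => (hF n).const_mul _]
    simp only [integral_const_mul]
    rfl
  calc ‖∫ x, Ssum X a lam x * G x ∂μ‖ ^ 2
      ≤ (∑ n ∈ s, |a n| * ‖∫ x, e (lam n * x) * G x ∂μ‖) ^ 2 := by
        rw [hsum]
        gcongr
        refine (norm_sum_le _ _).trans_eq (Finset.sum_congr rfl fun n _ => ?_)
        rw [norm_mul, Complex.norm_real, Real.norm_eq_abs]
    _ ≤ (∑ n ∈ s, |a n| ^ 2) * ∑ n ∈ s, ‖∫ x, e (lam n * x) * G x ∂μ‖ ^ 2 :=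
        Finset.sum_mul_sq_le_sq_mul_sq s _ _
    _ = (∑ n ∈ s, a n ^ 2) * ∑ n ∈ s, ‖∫ x, e (lam n * x) * G x ∂μ‖ ^ 2 := by
        simp only [sq_abs]

lemma log_one_add_le_mul_log {X p κ u : ℝ} (hX : 2 ≤ X) (hp : 0 ≤ p) (hκ : 0 ≤ κ) (hu : 0 ≤ u)
    (huX : u ≤ κ * X ^ p) :
    Real.log (1 + u) ≤ (Real.log (1 + κ) / Real.log 2 + p) * Real.log X := by
  have hlog2 : 0 < Real.log 2 := Real.log_pos one_lt_two
  have hlog2X : Real.log 2 ≤ Real.log X := Real.log_le_log two_pos hX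
  have hXp : 1 ≤ X ^ p := Real.one_le_rpow (by linarith) hp
  have hκ' : 0 ≤ Real.log (1 + κ) := Real.log_nonneg (by linarith)
  calc Real.log (1 + u) ≤ Real.log ((1 + κ) * X ^ p) :=
        Real.log_le_log (by linarith) (by nlinarith)
    _ = Real.log (1 + κ) + p * Real.log X := by
        rw [Real.log_mul (by linarith) (by positivity), Real.log_rpow (by linarith)]
    _ ≤ Real.log (1 + κ) / Real.log 2 * Real.log X + p * Real.log X := by
        gcongr
        rw [div_mul_eq_mul_div, le_div_iff₀ hlog2]
        exact mul_le_mul_of_nonneg_left hlog2X hκ'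
    _ = (Real.log (1 + κ) / Real.log 2 + p) * Real.log X := by ring

lemma norm_Jsum_le_add_harmonicKernel {X K U C₂ L : ℝ} {lam : ℕ → ℝ} (hX : 0 < X) (hU : 0 ≤ U)
    (hC₂ : 0 < C₂) (hL : 0 < L)
    (hJ : ∀ x : ℝ, x ≠ 0 → |x| ≤ K → ‖Jsum X lam x‖ ≤ C₂ * (U + L / |x|)) {t : ℝ}
    (ht : |t| ≤ K) : ‖Jsum X lam t‖ ≤ C₂ * U + harmonicKernel X (C₂ * L) t :=
  le_add_harmonicKernel (by positivity) hX (by positivity) (norm_Jsum_le hX.le lam t) fun ht0 =>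
    (hJ t ht0 ht).trans_eq (by ring)

lemma log_one_add_mul_sub_div_le {X c η C₂ : ℝ} (hX : 2 ≤ X) (hC₂ : 0 < C₂)
    (hab : X ^ (1 - c) ≤ X ^ (2 * η)) (hp : 0 ≤ c + 2 * η) :
    Real.log (1 + X * (X ^ (2 * η) - X ^ (1 - c)) / (C₂ * (Real.log X * X ^ (1 - c)))) ≤
      (Real.log (1 + (C₂ * Real.log 2)⁻¹) / Real.log 2 + (c + 2 * η)) * Real.log X := by
  have hX0 : 0 < X := by linarith
  have hlog2 : 0 < Real.log 2 := Real.log_pos one_lt_two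
  have hlogX : Real.log 2 ≤ Real.log X := Real.log_le_log two_pos hX
  have hB : 0 < C₂ * (Real.log X * X ^ (1 - c)) := by positivity [hlog2.trans_le hlogX]
  have hsplit : X * X ^ (2 * η) = X ^ (c + 2 * η) * X ^ (1 - c) := by
    rw [← Real.rpow_add hX0, mul_comm, ← Real.rpow_add_one hX0.ne']
    ring_nf
  refine log_one_add_le_mul_log hX hp (by positivity)
    (div_nonneg (mul_nonneg hX0.le (by linarith)) hB.le) ?_
  calc X * (X ^ (2 * η) - X ^ (1 - c)) / (C₂ * (Real.log X * X ^ (1 - c)))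
      ≤ X * X ^ (2 * η) / (C₂ * (Real.log X * X ^ (1 - c))) := by
        gcongr; linarith [Real.rpow_pos_of_pos hX0 (1 - c)]
    _ = (Real.log X)⁻¹ * (C₂⁻¹ * X ^ (c + 2 * η)) := by
        rw [hsplit]; field_simp
    _ ≤ (Real.log 2)⁻¹ * (C₂⁻¹ * X ^ (c + 2 * η)) := by gcongr
    _ = (C₂ * Real.log 2)⁻¹ * X ^ (c + 2 * η) := by rw [mul_inv]; ring

theorem lemma13ii (c : ℝ) (hc : 1 < c) :
    ∃ η₀ > 0, ∀ η : ℝ, 0 < η → η ≤ η₀ →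
    ∀ C₁ C₂ : ℝ, 0 < C₁ → 0 < C₂ →
    ∃ C > 0, ∀ X : ℝ, 2 ≤ X →
    ∀ lam a : ℕ → ℝ, (∀ n, |a n| ≤ C₁ * Real.log X) →
    ∀ U : ℝ, 0 < U →
    (∀ x : ℝ, x ≠ 0 → |x| ≤ 2 * X ^ (2 * η) →
      ‖Jsum X lam x‖ ≤ C₂ * (U + Real.log X * X ^ (1 - c) / |x|)) →
    ∀ G : ℝ → ℂ, Measurable G → (∃ M, ∀ x, ‖G x‖ ≤ M) →
    ‖∫ x in X ^ (1 - c)..X ^ (2 * η), Ssum X a lam x * G x‖ ^ 2 ≤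
      C * ((Real.log X) ^ 4 * X ^ (2 - c) *
            (∫ x in X ^ (1 - c)..X ^ (2 * η), ‖G x‖ ^ 2)
          + U * X * (Real.log X) ^ 2 *
            (∫ x in X ^ (1 - c)..X ^ (2 * η), ‖G x‖) ^ 2) := by
  refine ⟨1, one_pos, fun η hη _ C₁ C₂ hC₁ hC₂ => ?_⟩
  set D := Real.log (1 + (C₂ * Real.log 2)⁻¹) / Real.log 2 + (c + 2 * η)
  have hD : 0 ≤ D := add_nonneg (div_nonneg (Real.log_nonneg (by simp; positivity))
    (Real.log_nonneg one_le_two)) (by linarith)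
  refine ⟨C₁ ^ 2 * C₂ * (1 + 4 * D), by positivity, ?_⟩
  intro X hX lam a ha U hU hJ G hG ⟨M, hM⟩
  have hX0 : 0 < X := by linarith
  have hlogX : 0 < Real.log X := Real.log_pos (by linarith)
  have hab : X ^ (1 - c) ≤ X ^ (2 * η) :=
    Real.rpow_le_rpow_of_exponent_le (by linarith) (by linarith)
  have hsieve := sum_norm_sq_setIntegral_e_mul_le _ lam hab hX0 (by positivity) hG hM fun t ht =>
    norm_Jsum_le_add_harmonicKernel hX0 hU.le hC₂ (by positivity) hJ
      (by linarith [Real.rpow_pos_of_pos hX0 (1 - c)])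
  have hlog := log_one_add_mul_sub_div_le hX hC₂ hab (by linarith)
  have hCS := norm_integral_Ssum_mul_sq_le X a lam (IntegrableOn.of_bound (μ := volume)
    (s := Set.Ioc (X ^ (1 - c)) (X ^ (2 * η))) measure_Ioc_lt_top hG.aestronglyMeasurable M
    (.of_forall hM))
  simp only [intervalIntegral.integral_of_le hab]
  set Q₁ := ∫ x in Set.Ioc (X ^ (1 - c)) (X ^ (2 * η)), ‖G x‖
  set Q₂ := ∫ x in Set.Ioc (X ^ (1 - c)) (X ^ (2 * η)), ‖G x‖ ^ 2
  have hP₁ : 0 ≤ U * X * Real.log X ^ 2 * Q₁ ^ 2 := by positivity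
  have hP₂ : 0 ≤ Real.log X ^ 4 * X ^ (2 - c) * Q₂ :=
    mul_nonneg (by positivity) (integral_nonneg fun x => by positivity)
  calc _ ≤ (X * (C₁ * Real.log X) ^ 2) *
        (C₂ * U * Q₁ ^ 2 + 4 * (C₂ * (Real.log X * X ^ (1 - c))) * (D * Real.log X) * Q₂) := by
        refine hCS.trans (mul_le_mul (sum_sq_le_of_abs_le hX0.le ha) (hsieve.trans ?_)
          (by positivity) (by positivity))
        gcongr
    _ = C₁ ^ 2 * C₂ * (U * X * Real.log X ^ 2 * Q₁ ^ 2) +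
          C₁ ^ 2 * C₂ * (4 * D) * (Real.log X ^ 4 * X ^ (2 - c) * Q₂) := by
        rw [show (2 : ℝ) - c = 1 - c + 1 by ring, Real.rpow_add_one hX0.ne']
        ring
    _ ≤ _ := by
        nlinarith [mul_nonneg (mul_nonneg (by positivity : 0 ≤ C₁ ^ 2 * C₂) hD) hP₁,
          mul_nonneg (by positivity : 0 ≤ C₁ ^ 2 * C₂) hP₂]
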